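/- Submodularity for mixed-separations: let (A,B) and (C,D) be mixed-separations of a graph G. Define the corner-separator L(A,C) as the union of the two links adjacent to the corner (A\B)∩(C\D) together with the centre minus those diagonal edges without an endvertex in that corner, and similarly L(B,D). Then |L(A,C)| + |L(B,D)| ≤ |S(A,B)| + |S(C,D)|. Moreover, if equality holds then there are no jumping edges and every diagonal edge has its endvertices in the corners for {A,C} and {B,D}. -/

import Mathlib

namespace Paper

open SimpleGraph

variable {V : Type*} [Fintype V] [DecidableEq V]

/-- A graph is `k`-connected if it has more than `k` vertices and deleting
fewer than `k` vertices never disconnects it. -/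
def KConnected {W : Type*} (k : ℕ) (H : SimpleGraph W) : Prop :=
  k < Nat.card W ∧ ∀ S : Set W, S.ncard < k → (H.induce Sᶜ).Connected

/-- A mixed-separation of `G`: `A ∪ B = V(G)` and both `A \ B` and `B \ A` are nonempty. -/
def MixedSep (G : SimpleGraph V) (A B : Set V) : Prop :=
  A ∪ B = Set.univ ∧ (A \ B).Nonempty ∧ (B \ A).Nonempty

/-- The edges of the separator of `(A,B)`: the edges between `A \ B` and `B \ A`. -/
def sepEdges (G : SimpleGraph V) (A B : Set V) : Set (Sym2 V) :=
  {e | e ∈ G.edgeSet ∧ ∃ x ∈ A \ B, ∃ y ∈ B \ A, e = s(x, y)}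

/-- The separator of `(A,B)`: the vertices of `A ∩ B` together with the
edges between `A \ B` and `B \ A`, viewed as a set in `V ⊕ Sym2 V`. -/
def sepSet (G : SimpleGraph V) (A B : Set V) : Set (V ⊕ Sym2 V) :=
  (Sum.inl '' (A ∩ B)) ∪ (Sum.inr '' sepEdges G A B)

/-- The order of a mixed-separation: the size of its separator. -/
noncomputable def sepOrder (G : SimpleGraph V) (A B : Set V) : ℕ :=
  (sepSet G A B).ncard

/-- A mixed `k`-separation. -/
def MixedKSep (G : SimpleGraph V) (k : ℕ) (A B : Set V) : Prop :=
  MixedSep G A B ∧ sepOrder G A B = k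

/-- A tri-separation: a mixed 3-separation such that every vertex of `A ∩ B`
has at least two neighbours in both `G[A]` and `G[B]`. -/
def TriSep (G : SimpleGraph V) (A B : Set V) : Prop :=
  MixedKSep G 3 A B ∧
    ∀ v ∈ A ∩ B, 2 ≤ (G.neighborSet v ∩ A).ncard ∧ 2 ≤ (G.neighborSet v ∩ B).ncard

/-- Two mixed-separations are nested if, after possibly swapping the names of
the sides of either one, `A ⊆ C` and `B ⊇ D`. -/
def Nested (A B C D : Set V) : Prop :=
  (A ⊆ C ∧ D ⊆ B) ∨ (A ⊆ D ∧ C ⊆ B) ∨ (B ⊆ C ∧ D ⊆ A) ∨ (B ⊆ D ∧ C ⊆ A)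

/-- The induced subgraph `G[A]` contains a cycle. -/
def HasCycleIn (G : SimpleGraph V) (A : Set V) : Prop :=
  ∃ (u : V) (p : G.Walk u u), p.IsCycle ∧ ∀ x ∈ p.support, x ∈ A

/-- A mixed 3-separation is nontrivial if both sides induce a subgraph containing a cycle. -/
def NontrivialSep (G : SimpleGraph V) (A B : Set V) : Prop :=
  HasCycleIn G A ∧ HasCycleIn G B

/-- A mixed-separation is strong if every vertex in its separator has degree at least 4. -/
def StrongSep (G : SimpleGraph V) (A B : Set V) : Prop :=
  ∀ v ∈ A ∩ B, 4 ≤ (G.neighborSet v).ncard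

/-- A tri-separation is totally nested if it is nested with every tri-separation of `G`. -/
def TotallyNested (G : SimpleGraph V) (A B : Set V) : Prop :=
  ∀ C D : Set V, TriSep G C D → Nested A B C D

/-- A trivial tri-separation: its sides are the sides `{v}` and `V \ {v}` of an
atomic cut at a degree-3 vertex `v`. -/
def TrivialSep (G : SimpleGraph V) (A B : Set V) : Prop :=
  ∃ v : V, (G.neighborSet v).ncard = 3 ∧
    ((A = {v} ∧ B = {v}ᶜ) ∨ (B = {v} ∧ A = {v}ᶜ))

/-- Diagonal edges of the crossing-diagram of `(A,B)` and `(C,D)`: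
edges whose endvertices lie in opposite corners. -/
def diagEdges (G : SimpleGraph V) (A B C D : Set V) : Set (Sym2 V) :=
  {e | e ∈ G.edgeSet ∧ ∃ x y, e = s(x, y) ∧
    ((x ∈ (A \ B) ∩ (C \ D) ∧ y ∈ (B \ A) ∩ (D \ C)) ∨
     (x ∈ (A \ B) ∩ (D \ C) ∧ y ∈ (B \ A) ∩ (C \ D)))}

/-- The centre of the crossing-diagram: `A ∩ B ∩ C ∩ D` together with the diagonal edges. -/
def centre (G : SimpleGraph V) (A B C D : Set V) : Set (V ⊕ Sym2 V) :=
  (Sum.inl '' (A ∩ B ∩ C ∩ D)) ∪ (Sum.inr '' diagEdges G A B C D)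

/-- The link for the side `C` in the crossing-diagram of `(A,B)` and `(C,D)`:
the vertices `(A ∩ B) \ D` together with the non-diagonal edges of the separator
of `(A,B)` having an endvertex in a corner for `C`. -/
def link (G : SimpleGraph V) (A B C D : Set V) : Set (V ⊕ Sym2 V) :=
  (Sum.inl '' ((A ∩ B) \ D)) ∪
    (Sum.inr '' {e | e ∈ sepEdges G A B ∧ e ∉ diagEdges G A B C D ∧ ∃ x ∈ e, x ∈ C \ D})

/-- The corner-separator at the corner for `{A,C}`: the union of the links for `A`
and for `C` together with the centre, minus the diagonal edges without an
endvertex in the corner for `{A,C}`. -/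
def cornerSep (G : SimpleGraph V) (A B C D : Set V) : Set (V ⊕ Sym2 V) :=
  link G C D A B ∪ link G A B C D ∪ (Sum.inl '' (A ∩ B ∩ C ∩ D)) ∪
    (Sum.inr '' {e | e ∈ diagEdges G A B C D ∧ ∃ x ∈ e, x ∈ (A \ B) ∩ (C \ D)})

/-- Jumping edges: edges joining vertices of two opposite links. -/
def jumpEdges (G : SimpleGraph V) (A B C D : Set V) : Set (Sym2 V) :=
  {e | e ∈ G.edgeSet ∧ ∃ x y, e = s(x, y) ∧
    ((x ∈ (A ∩ B) \ D ∧ y ∈ (A ∩ B) \ C) ∨ (x ∈ (C ∩ D) \ B ∧ y ∈ (C ∩ D) \ A))}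

/-- A 2-separation: a separation of order two with no edges in its separator. -/
def TwoSep (G : SimpleGraph V) (A B : Set V) : Prop :=
  A ∪ B = Set.univ ∧ (A \ B).Nonempty ∧ (B \ A).Nonempty ∧
    (A ∩ B).ncard = 2 ∧ sepEdges G A B = ∅

/-- `K` is (the vertex set of) a connected component of `G - S`. -/
def IsCompOf (G : SimpleGraph V) (S K : Set V) : Prop :=
  ∃ c : (G.induce Sᶜ).ConnectedComponent, K = Subtype.val '' c.supp

end Paper

/-! Both corner-separators lie in `S(A,B) ∪ S(C,D)`, and, since `A ∪ B = C ∪ D = V`, an element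
common to both lies in `S(A,B) ∩ S(C,D)`. As `|X| + |Y| = |X ∪ Y| + |X ∩ Y|` on both sides, the
inequality follows, and equality forces both inclusions to be equalities. A jumping edge lies in
one of the separators but in neither corner-separator; a diagonal edge joining the corners for
`{A,D}` and `{B,C}` lies in both separators but not in `L(A,C)`. -/

section

variable {α : Type*} [Finite α] {X Y S T : Set α}

theorem Set.ncard_add_ncard_le_of_subset_union_of_subset_inter (hU : X ∪ Y ⊆ S ∪ T)
    (hI : X ∩ Y ⊆ S ∩ T) : X.ncard + Y.ncard ≤ S.ncard + T.ncard := by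
  rw [← Set.ncard_union_add_ncard_inter X Y, ← Set.ncard_union_add_ncard_inter S T]
  exact add_le_add (Set.ncard_le_ncard hU) (Set.ncard_le_ncard hI)

theorem Set.union_eq_and_inter_eq_of_ncard_add_ncard_eq (hU : X ∪ Y ⊆ S ∪ T)
    (hI : X ∩ Y ⊆ S ∩ T) (h : X.ncard + Y.ncard = S.ncard + T.ncard) :
    X ∪ Y = S ∪ T ∧ X ∩ Y = S ∩ T := by
  rw [← Set.ncard_union_add_ncard_inter X Y, ← Set.ncard_union_add_ncard_inter S T] at h
  have hU' := Set.ncard_le_ncard hU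
  have hI' := Set.ncard_le_ncard hI
  exact ⟨Set.eq_of_subset_of_ncard_le hU (by omega), Set.eq_of_subset_of_ncard_le hI (by omega)⟩

end

namespace Paper

open SimpleGraph

section

variable {V : Type*} (G : SimpleGraph V) (A B C D : Set V)

@[simp]
theorem inl_mem_sepSet_iff {v : V} : Sum.inl v ∈ sepSet G A B ↔ v ∈ A ∩ B := by
  simp [sepSet]

@[simp]
theorem inr_mem_sepSet_iff {e : Sym2 V} : Sum.inr e ∈ sepSet G A B ↔ e ∈ sepEdges G A B := by
  simp [sepSet]

theorem inl_mem_cornerSep_iff {v : V} :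
    Sum.inl v ∈ cornerSep G A B C D ↔
      v ∈ (C ∩ D) \ B ∨ v ∈ (A ∩ B) \ D ∨ v ∈ A ∩ B ∩ C ∩ D := by
  simp only [cornerSep, link, Set.mem_union, Set.mem_image, Sum.inl.injEq, reduceCtorEq,
    and_false, exists_false, or_false, exists_eq_right, or_assoc]

theorem inr_mem_cornerSep_iff {e : Sym2 V} :
    Sum.inr e ∈ cornerSep G A B C D ↔
      (e ∈ sepEdges G C D ∧ e ∉ diagEdges G C D A B ∧ ∃ x ∈ e, x ∈ A \ B) ∨
      (e ∈ sepEdges G A B ∧ e ∉ diagEdges G A B C D ∧ ∃ x ∈ e, x ∈ C \ D) ∨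
      (e ∈ diagEdges G A B C D ∧ ∃ x ∈ e, x ∈ (A \ B) ∩ (C \ D)) := by
  simp only [cornerSep, link, Set.mem_union, Set.mem_image, Sum.inr.injEq, reduceCtorEq,
    and_false, exists_false, false_or, exists_eq_right, Set.mem_ofPred_eq, or_assoc]

theorem sepEdges_comm : sepEdges G B A = sepEdges G A B := by
  ext e
  constructor <;> rintro ⟨he, x, hx, y, hy, rfl⟩ <;> exact ⟨he, y, hy, x, hx, Sym2.eq_swap⟩

theorem sepSet_comm : sepSet G B A = sepSet G A B := by
  rw [sepSet, sepSet, Set.inter_comm, sepEdges_comm]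

theorem diagEdges_comm : diagEdges G C D A B = diagEdges G A B C D := by
  ext e
  constructor <;> rintro ⟨he, x, y, rfl, ⟨hx, hy⟩ | ⟨hx, hy⟩⟩
  · exact ⟨he, x, y, rfl, Or.inl ⟨⟨hx.2, hx.1⟩, ⟨hy.2, hy.1⟩⟩⟩
  · exact ⟨he, y, x, Sym2.eq_swap, Or.inr ⟨⟨hy.2, hy.1⟩, ⟨hx.2, hx.1⟩⟩⟩
  · exact ⟨he, x, y, rfl, Or.inl ⟨⟨hx.2, hx.1⟩, ⟨hy.2, hy.1⟩⟩⟩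
  · exact ⟨he, y, x, Sym2.eq_swap, Or.inr ⟨⟨hy.2, hy.1⟩, ⟨hx.2, hx.1⟩⟩⟩

theorem diagEdges_subset_sepEdges : diagEdges G A B C D ⊆ sepEdges G A B := by
  rintro e ⟨he, x, y, rfl, ⟨hx, hy⟩ | ⟨hx, hy⟩⟩ <;> exact ⟨he, x, hx.1, y, hy.1, rfl⟩

theorem cornerSep_comm : cornerSep G C D A B = cornerSep G A B C D := by
  ext (v | e)
  · simp only [inl_mem_cornerSep_iff, Set.mem_inter_iff, Set.mem_sdiff]
    tauto
  · simp only [inr_mem_cornerSep_iff, diagEdges_comm, Set.inter_comm (C \ D)]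
    exact or_left_comm

theorem cornerSep_subset_sepSet_union :
    cornerSep G A B C D ⊆ sepSet G A B ∪ sepSet G C D := by
  rintro (v | e) h
  · rw [inl_mem_cornerSep_iff] at h
    simp only [Set.mem_union, inl_mem_sepSet_iff, Set.mem_inter_iff, Set.mem_sdiff] at h ⊢
    tauto
  · rw [inr_mem_cornerSep_iff] at h
    rcases h with ⟨h, -⟩ | ⟨h, -⟩ | ⟨h, -⟩
    · exact Or.inr ((inr_mem_sepSet_iff ..).2 h)
    · exact Or.inl ((inr_mem_sepSet_iff ..).2 h)
    · exact Or.inl ((inr_mem_sepSet_iff ..).2 (diagEdges_subset_sepEdges G A B C D h))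

theorem mem_sepEdges_of_mem_of_mem {e : Sym2 V} (he : e ∈ G.edgeSet)
    (hA : ∃ x ∈ e, x ∈ A \ B) (hB : ∃ y ∈ e, y ∈ B \ A) : e ∈ sepEdges G A B := by
  induction e with
  | _ u v =>
    obtain ⟨x, hxe, hx⟩ := hA
    obtain ⟨y, hye, hy⟩ := hB
    rw [Sym2.mem_iff] at hxe hye
    rcases hxe with rfl | rfl <;> rcases hye with rfl | rfl
    · exact absurd hx.1 hy.2
    · exact ⟨he, x, hx, y, hy, rfl⟩
    · exact ⟨he, x, hx, y, hy, Sym2.eq_swap⟩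
    · exact absurd hx.1 hy.2

theorem mem_sepEdges_or_of_inr_mem_cornerSep {e : Sym2 V}
    (h : Sum.inr e ∈ cornerSep G A B C D) :
    e ∈ sepEdges G A B ∨ (e ∈ G.edgeSet ∧ ∃ x ∈ e, x ∈ A \ B) := by
  rw [inr_mem_cornerSep_iff] at h
  rcases h with ⟨h, -, hx⟩ | ⟨h, -⟩ | ⟨h, -⟩
  · exact Or.inr ⟨h.1, hx⟩
  · exact Or.inl h
  · exact Or.inl (diagEdges_subset_sepEdges G A B C D h)

theorem mem_sepEdges_of_inr_mem_cornerSep_inter {e : Sym2 V}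
    (h : Sum.inr e ∈ cornerSep G A B C D ∩ cornerSep G B A D C) : e ∈ sepEdges G A B := by
  have h₂ := mem_sepEdges_or_of_inr_mem_cornerSep G B A D C h.2
  rw [sepEdges_comm] at h₂
  rcases mem_sepEdges_or_of_inr_mem_cornerSep G A B C D h.1 with h₁ | ⟨he, hA⟩
  · exact h₁
  · rcases h₂ with h₂ | ⟨-, hB⟩
    · exact h₂
    · exact mem_sepEdges_of_mem_of_mem G A B he hA hB

theorem cornerSep_inter_subset_sepSet_inter (hAB : A ∪ B = Set.univ) (hCD : C ∪ D = Set.univ) :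
    cornerSep G A B C D ∩ cornerSep G B A D C ⊆ sepSet G A B ∩ sepSet G C D := by
  rintro (v | e) h
  · have hvAB : v ∈ A ∪ B := hAB ▸ Set.mem_univ v
    have hvCD : v ∈ C ∪ D := hCD ▸ Set.mem_univ v
    simp only [Set.mem_inter_iff, inl_mem_cornerSep_iff, inl_mem_sepSet_iff, Set.mem_sdiff,
      Set.mem_union] at h hvAB hvCD ⊢
    tauto
  · refine ⟨(inr_mem_sepSet_iff ..).2 (mem_sepEdges_of_inr_mem_cornerSep_inter G A B C D h),
      (inr_mem_sepSet_iff ..).2 (mem_sepEdges_of_inr_mem_cornerSep_inter G C D A B ?_)⟩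
    rwa [cornerSep_comm, cornerSep_comm G B A D C]

theorem s_notMem_sepEdges_of_mem_inter {x y : V} (hx : x ∈ A ∩ B) :
    s(x, y) ∉ sepEdges G A B := by
  rintro ⟨-, u, hu, v, hv, heq⟩
  rcases Sym2.eq_iff.1 heq with ⟨rfl, rfl⟩ | ⟨rfl, rfl⟩
  · exact hu.2 hx.2
  · exact hv.2 hx.1

theorem inr_notMem_cornerSep {x y : V} (hx : x ∈ A ∩ B) (hy : y ∈ A ∩ B) :
    Sum.inr s(x, y) ∉ cornerSep G A B C D := by
  intro h
  rcases mem_sepEdges_or_of_inr_mem_cornerSep G A B C D h with h | ⟨-, z, hz, hzA⟩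
  · exact s_notMem_sepEdges_of_mem_inter G A B hx h
  · rcases Sym2.mem_iff.1 hz with rfl | rfl
    · exact hzA.2 hx.2
    · exact hzA.2 hy.2

theorem s_mem_sepEdges (hAB : A ∪ B = Set.univ) {x y : V} (hxy : G.Adj x y) (hx : x ∉ B)
    (hy : y ∉ A) : s(x, y) ∈ sepEdges G A B :=
  have hx' : x ∈ A ∪ B := hAB ▸ Set.mem_univ x
  have hy' : y ∈ A ∪ B := hAB ▸ Set.mem_univ y
  ⟨hxy, x, ⟨hx'.resolve_right hx, hx⟩, y, ⟨hy'.resolve_left hy, hy⟩, rfl⟩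

theorem not_adj_of_cornerSep_union_eq (hCD : C ∪ D = Set.univ)
    (h : cornerSep G A B C D ∪ cornerSep G B A D C = sepSet G A B ∪ sepSet G C D)
    {x y : V} (hx : x ∈ (A ∩ B) \ D) (hy : y ∈ (A ∩ B) \ C) : ¬ G.Adj x y := by
  intro hxy
  have hmem : Sum.inr s(x, y) ∈ cornerSep G A B C D ∪ cornerSep G B A D C := by
    rw [h]
    exact Or.inr ((inr_mem_sepSet_iff ..).2 (s_mem_sepEdges G C D hCD hxy hx.2 hy.2))
  rcases hmem with hmem | hmem
  · exact inr_notMem_cornerSep G A B C D hx.1 hy.1 hmem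
  · exact inr_notMem_cornerSep G B A D C ⟨hx.1.2, hx.1.1⟩ ⟨hy.1.2, hy.1.1⟩ hmem

theorem jumpEdges_eq_empty_of_cornerSep_union_eq (hAB : A ∪ B = Set.univ)
    (hCD : C ∪ D = Set.univ)
    (h : cornerSep G A B C D ∪ cornerSep G B A D C = sepSet G A B ∪ sepSet G C D) :
    jumpEdges G A B C D = ∅ := by
  refine Set.eq_empty_of_forall_notMem ?_
  rintro e ⟨he, x, y, rfl, ⟨hx, hy⟩ | ⟨hx, hy⟩⟩
  · exact not_adj_of_cornerSep_union_eq G A B C D hCD h hx hy he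
  · refine not_adj_of_cornerSep_union_eq G C D A B hAB ?_ hx hy he
    rwa [cornerSep_comm, cornerSep_comm G B A D C, Set.union_comm (sepSet G C D)]

theorem exists_orientation_of_cornerSep_inter_eq
    (h : cornerSep G A B C D ∩ cornerSep G B A D C = sepSet G A B ∩ sepSet G C D) :
    ∀ e ∈ diagEdges G A B C D, ∃ x y : V, e = s(x, y) ∧
      x ∈ (A \ B) ∩ (C \ D) ∧ y ∈ (B \ A) ∩ (D \ C) := by
  rintro e hd
  obtain ⟨-, x, y, rfl, ⟨hx, hy⟩ | ⟨hx, hy⟩⟩ := id hd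
  · exact ⟨x, y, rfl, hx, hy⟩
  · have hsep : Sum.inr s(x, y) ∈ sepSet G A B ∩ sepSet G C D := by
      refine ⟨(inr_mem_sepSet_iff ..).2 (diagEdges_subset_sepEdges G A B C D hd),
        (inr_mem_sepSet_iff ..).2 (diagEdges_subset_sepEdges G C D A B ?_)⟩
      rwa [diagEdges_comm]
    have hmem := (h ▸ hsep).1
    -- a diagonal edge enters this corner-separator only through an end in the corner for `{A,C}`
    rw [inr_mem_cornerSep_iff] at hmem
    rcases hmem with ⟨-, hnd, -⟩ | ⟨-, hnd, -⟩ | ⟨-, z, hz, hzAC⟩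
    · exact absurd (by rwa [diagEdges_comm]) hnd
    · exact absurd hd hnd
    · rcases Sym2.mem_iff.1 hz with rfl | rfl
      · exact (hx.2.2 hzAC.2.1).elim
      · exact (hy.1.2 hzAC.1.1).elim

end

variable {V : Type*} [Fintype V] [DecidableEq V]

/-- Submodularity for mixed-separations, with the structure of
the equality case. -/
theorem stmt4 (G : SimpleGraph V) (A B C D : Set V)
    (hAB : MixedSep G A B) (hCD : MixedSep G C D) :
    (cornerSep G A B C D).ncard + (cornerSep G B A D C).ncard ≤
        sepOrder G A B + sepOrder G C D ∧
      ((cornerSep G A B C D).ncard + (cornerSep G B A D C).ncard =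
          sepOrder G A B + sepOrder G C D →
        jumpEdges G A B C D = ∅ ∧
          ∀ e ∈ diagEdges G A B C D, ∃ x y : V, e = s(x, y) ∧
            x ∈ (A \ B) ∩ (C \ D) ∧ y ∈ (B \ A) ∩ (D \ C)) := by
  have hU : cornerSep G A B C D ∪ cornerSep G B A D C ⊆ sepSet G A B ∪ sepSet G C D := by
    refine Set.union_subset (cornerSep_subset_sepSet_union G A B C D) ?_
    rw [← sepSet_comm G A B, ← sepSet_comm G C D]
    exact cornerSep_subset_sepSet_union G B A D C
  have hI := cornerSep_inter_subset_sepSet_inter G A B C D hAB.1 hCD.1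
  refine ⟨Set.ncard_add_ncard_le_of_subset_union_of_subset_inter hU hI, fun heq => ?_⟩
  obtain ⟨hU', hI'⟩ := Set.union_eq_and_inter_eq_of_ncard_add_ncard_eq hU hI heq
  exact ⟨jumpEdges_eq_empty_of_cornerSep_union_eq G A B C D hAB.1 hCD.1 hU',
    exists_orientation_of_cornerSep_inter_eq G A B C D hI'⟩

end Paper
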